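/- Let q ∈ ℂ with |q| = 1, q not a root of unity, and suppose the power series Σ_{n≥0} x^n/(q;q)_n has positive radius of convergence. Let u ∈ ℂ[[x]] be a power series with constant term 1 and positive radius of convergence. Then the unique formal power series h ∈ ℂ[[x]] with h(0) = 1 and h(qx) = u(x)·h(x) has positive radius of convergence. -/

import Mathlib

/-!
Comparing coefficients in `h(qx) = u(x) h(x)` gives
`(q^(m+1) - 1) h_{m+1} = ∑_{i+j=m} u_{i+1} h_j`. Since `|q| = 1`, every factor of
`(q;q)_n` has norm at most `2`, so multiplying by `(q;q)_m` turns this into a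
Grönwall-type inequality for `a_n = |h_n| |(q;q)_n|`, which forces `a_n ≤ A^n`.
Hence `|h_n| ≤ A^n / |(q;q)_n|`, and `h` converges wherever `∑ x^n/(q;q)_n` does at `A x`.
-/

open scoped BigOperators

/-- The q-Pochhammer symbol `(lam; q)_n = (1 - lam)(1 - q lam) ⋯ (1 - q^{n-1} lam)`. -/
noncomputable def qPoch (q lam : ℂ) (n : ℕ) : ℂ :=
  ∏ k ∈ Finset.range n, (1 - q ^ k * lam)

/-- The radius of convergence of the power series `∑ c n * x ^ n`. -/
noncomputable def radiusOfConv (c : ℕ → ℂ) : ENNReal :=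
  ⨆ (r : NNReal) (C : ℝ) (_ : ∀ n : ℕ, ‖c n‖ * (r : ℝ) ^ n ≤ C), (r : ENNReal)

open PowerSeries Finset

lemma radiusOfConv_pos_iff {c : ℕ → ℂ} :
    0 < radiusOfConv c ↔ ∃ r : ℝ, 0 < r ∧ ∃ C : ℝ, ∀ n, ‖c n‖ * r ^ n ≤ C := by
  constructor
  · intro h
    simp only [radiusOfConv, lt_iSup_iff] at h
    obtain ⟨r, C, hC, hr⟩ := h
    exact ⟨r, by exact_mod_cast hr, C, hC⟩
  · rintro ⟨r, hr, C, hC⟩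
    refine lt_of_lt_of_le (ENNReal.coe_pos.mpr (Real.toNNReal_pos.mpr hr)) ?_
    exact le_iSup₂_of_le r.toNNReal C (le_iSup_of_le (by simpa [hr.le] using hC) le_rfl)

lemma exists_norm_le_geometric_of_radiusOfConv_pos {c : ℕ → ℂ} (h : 0 < radiusOfConv c) :
    ∃ M s : ℝ, 0 ≤ M ∧ 0 < s ∧ ∀ n, ‖c n‖ ≤ M * s ^ n := by
  obtain ⟨r, hr, C, hC⟩ := radiusOfConv_pos_iff.mp h
  refine ⟨C, r⁻¹, le_trans (by simp) (hC 0), inv_pos.mpr hr, fun n => ?_⟩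
  rw [inv_pow, ← div_eq_mul_inv, le_div_iff₀ (by positivity)]
  exact hC n

lemma radiusOfConv_pos_of_norm_le_pow_mul {c d : ℕ → ℂ} {A : ℝ} (hA : 0 < A)
    (hd : 0 < radiusOfConv d) (hcd : ∀ n, ‖c n‖ ≤ A ^ n * ‖d n‖) : 0 < radiusOfConv c := by
  obtain ⟨r, hr, C, hC⟩ := radiusOfConv_pos_iff.mp hd
  refine radiusOfConv_pos_iff.mpr ⟨r / A, div_pos hr hA, C, fun n => ?_⟩
  calc ‖c n‖ * (r / A) ^ n ≤ A ^ n * ‖d n‖ * (r / A) ^ n := by gcongr; exact hcd n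
    _ = ‖d n‖ * r ^ n := by rw [div_pow]; field_simp
    _ ≤ C := hC n

lemma qPoch_succ (q lam : ℂ) (n : ℕ) :
    qPoch q lam (n + 1) = qPoch q lam n * (1 - q ^ n * lam) :=
  prod_range_succ _ _

lemma qPoch_self_ne_zero {q : ℂ} (hq : ∀ n : ℕ, 1 ≤ n → q ^ n ≠ 1) (n : ℕ) :
    qPoch q q n ≠ 0 := by
  refine prod_ne_zero_iff.mpr fun k _ hk => hq (k + 1) k.succ_pos ?_
  rw [pow_succ]
  linear_combination -hk

lemma norm_qPoch_add_le {q lam : ℂ} (hq : ‖q‖ ≤ 1) (hlam : ‖lam‖ ≤ 1) (n i : ℕ) :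
    ‖qPoch q lam (n + i)‖ ≤ 2 ^ i * ‖qPoch q lam n‖ := by
  rw [qPoch, prod_range_add, norm_mul, mul_comm, ← qPoch]
  gcongr
  rw [norm_prod]
  refine (prod_le_prod (fun _ _ => norm_nonneg _) fun k _ => ?_).trans_eq
    (by simp : ∏ _k ∈ range i, (2 : ℝ) = 2 ^ i)
  calc ‖1 - q ^ (n + k) * lam‖ ≤ ‖(1 : ℂ)‖ + ‖q‖ ^ (n + k) * ‖lam‖ := by
        rw [← norm_pow, ← norm_mul]; exact norm_sub_le _ _
    _ ≤ 1 + 1 * 1 := by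
        rw [norm_one]; gcongr; exact pow_le_one₀ (norm_nonneg _) hq
    _ = 2 := by norm_num

lemma PowerSeries.pow_succ_sub_one_mul_coeff_succ {R : Type*} [CommRing R] {q : R}
    {u h : R⟦X⟧} (hu0 : constantCoeff u = 1) (hh : rescale q h = u * h) (m : ℕ) :
    (q ^ (m + 1) - 1) * coeff (m + 1) h =
      ∑ p ∈ antidiagonal m, coeff (p.1 + 1) u * coeff p.2 h := by
  have e := congrArg (coeff (m + 1)) hh
  rw [coeff_rescale, coeff_mul, Nat.sum_antidiagonal_succ, coeff_zero_eq_constantCoeff, hu0,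
    one_mul] at e
  linear_combination e

lemma le_pow_of_le_sum_antidiagonal {a : ℕ → ℝ} {A B t : ℝ} (hB : 0 ≤ B) (ht : 0 ≤ t)
    (htA : 2 * t ≤ A) (hBA : 2 * B ≤ A) (h0 : a 0 ≤ 1)
    (hrec : ∀ m, a (m + 1) ≤ ∑ p ∈ antidiagonal m, B * t ^ p.1 * a p.2) (n : ℕ) :
    a n ≤ A ^ n := by
  induction n using Nat.strong_induction_on with
  | _ n ih =>
    cases n with
    | zero => simpa using h0
    | succ m =>
      have hA : 0 ≤ A := by linarith
      calc a (m + 1) ≤ ∑ p ∈ antidiagonal m, B * t ^ p.1 * a p.2 := hrec m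
        _ ≤ ∑ p ∈ antidiagonal m, B * A ^ m * (1 / 2) ^ p.1 := by
          refine sum_le_sum fun p hp => ?_
          rw [HasAntidiagonal.mem_antidiagonal] at hp
          calc B * t ^ p.1 * a p.2 ≤ B * t ^ p.1 * A ^ p.2 := by
                gcongr; exact ih _ (by omega)
            _ ≤ B * (A / 2) ^ p.1 * A ^ p.2 := by gcongr; linarith
            _ = B * A ^ m * (1 / 2) ^ p.1 := by
                rw [← hp, pow_add, div_eq_mul_one_div A 2, mul_pow]; ring
        _ = B * A ^ m * ∑ i ∈ range (m + 1), (1 / 2 : ℝ) ^ i := by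
          rw [← mul_sum, Nat.sum_antidiagonal_eq_sum_range_succ_mk]
        _ ≤ B * A ^ m * 2 := by gcongr; exact sum_geometric_two_le _
        _ ≤ A ^ (m + 1) := by rw [pow_succ]; nlinarith [pow_nonneg hA m]

lemma norm_coeff_mul_norm_qPoch_le_of_rescale_eq_mul {q : ℂ} (hq : ‖q‖ ≤ 1) {u h : ℂ⟦X⟧}
    (hu0 : constantCoeff u = 1) (hh0 : constantCoeff h = 1) (hh : rescale q h = u * h)
    {M s : ℝ} (hM : 0 ≤ M) (hs : 0 ≤ s) (hus : ∀ n, ‖coeff n u‖ ≤ M * s ^ n) (n : ℕ) :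
    ‖coeff n h‖ * ‖qPoch q q n‖ ≤ (4 * s + 2 * M * s) ^ n := by
  refine le_pow_of_le_sum_antidiagonal (a := fun n => ‖coeff n h‖ * ‖qPoch q q n‖)
    (A := 4 * s + 2 * M * s) (B := M * s) (t := 2 * s) (by positivity)
    (by positivity) (by nlinarith) (by nlinarith) ?_ (fun m => ?_) n
  · simp [qPoch, hh0]
  have hfactor : ‖1 - q ^ m * q‖ = ‖q ^ (m + 1) - 1‖ := by rw [← norm_neg, pow_succ, neg_sub]
  calc ‖coeff (m + 1) h‖ * ‖qPoch q q (m + 1)‖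
      = ‖(q ^ (m + 1) - 1) * coeff (m + 1) h‖ * ‖qPoch q q m‖ := by
        rw [qPoch_succ, norm_mul, norm_mul, hfactor]; ring
    _ ≤ ∑ p ∈ antidiagonal m, ‖coeff (p.1 + 1) u‖ * ‖coeff p.2 h‖ * ‖qPoch q q m‖ := by
        rw [pow_succ_sub_one_mul_coeff_succ hu0 hh, ← sum_mul]
        gcongr
        exact (norm_sum_le _ _).trans_eq (by simp only [norm_mul])
    _ ≤ ∑ p ∈ antidiagonal m, M * s ^ (p.1 + 1) * ‖coeff p.2 h‖ * (2 ^ p.1 * ‖qPoch q q p.2‖) := by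
        refine sum_le_sum fun p hp => ?_
        rw [HasAntidiagonal.mem_antidiagonal] at hp
        have hP : ‖qPoch q q m‖ ≤ 2 ^ p.1 * ‖qPoch q q p.2‖ := by
          rw [← hp, add_comm]; exact norm_qPoch_add_le hq hq _ _
        gcongr
        exact hus _
    _ = ∑ p ∈ antidiagonal m, M * s * (2 * s) ^ p.1 * (‖coeff p.2 h‖ * ‖qPoch q q p.2‖) := by
        refine sum_congr rfl fun p _ => ?_
        ring

theorem stmt16_general (q : ℂ) (hqabs : ‖q‖ = 1)
    (hq : ∀ n : ℕ, 1 ≤ n → q ^ n ≠ 1)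
    (hQ : 0 < radiusOfConv (fun n => (qPoch q q n)⁻¹))
    (u : PowerSeries ℂ) (hu0 : PowerSeries.constantCoeff u = 1)
    (hu : 0 < radiusOfConv (fun n => PowerSeries.coeff n u))
    (h : PowerSeries ℂ) (hh0 : PowerSeries.constantCoeff h = 1)
    (hh : PowerSeries.rescale q h = u * h) :
    0 < radiusOfConv (fun n => PowerSeries.coeff n h) := by
  obtain ⟨M, s, hM, hs, hus⟩ := exists_norm_le_geometric_of_radiusOfConv_pos hu
  refine radiusOfConv_pos_of_norm_le_pow_mul (A := 4 * s + 2 * M * s) (by positivity) hQ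
    fun n => ?_
  rw [norm_inv, ← div_eq_mul_inv, le_div_iff₀ (norm_pos_iff.mpr (qPoch_self_ne_zero hq n))]
  exact norm_coeff_mul_norm_qPoch_le_of_rescale_eq_mul hqabs.le hu0 hh0 hh hM hs.le hus n

theorem stmt16 (q : ℂ) (hqabs : ‖q‖ = 1) (hq0 : q ≠ 0)
    (hq : ∀ n : ℕ, 1 ≤ n → q ^ n ≠ 1)
    (hQ : 0 < radiusOfConv (fun n => (qPoch q q n)⁻¹))
    (u : PowerSeries ℂ) (hu0 : PowerSeries.constantCoeff u = 1)
    (hu : 0 < radiusOfConv (fun n => PowerSeries.coeff n u))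
    (h : PowerSeries ℂ) (hh0 : PowerSeries.constantCoeff h = 1)
    (hh : PowerSeries.rescale q h = u * h) :
    0 < radiusOfConv (fun n => PowerSeries.coeff n h) :=
  stmt16_general q hqabs hq hQ u hu0 hu h hh0 hh
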